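/- Let J > 0 and h > 0, let G = (V,E) and G̃ = (Ṽ,Ẽ) be finite connected multigraphs with |Ṽ| ≥ |V|, and let ι : V → Ṽ be an injection such that the symmetric difference of Ẽ and the image of E under ι contains at most k edges (counted with multiplicity). Then |Γ*(G) − Γ*(G̃)| ≤ J·k + h·(|Ṽ| − |V|). -/

import Mathlib

/-!
Restricting a configuration of `G̃` to `ι(V)`, or extending a configuration of `G` by `−1`
off `ι(V)`, changes its energy relative to `⊟` by at most `J·k + h·(|Ṽ| − |V|)`: each edge of
the symmetric difference contributes at most `J` and each vertex off `ι(V)` at most `h`.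
A flip path `⊟ → ⊞` in `G̃` restricts to one in `G` (flips off `ι(V)` become idle steps).
Conversely a flip path in `G` extends to one in `G̃` ending at the extension of `⊞`, which is
completed by flipping the remaining vertices; all configurations on that last stretch restrict
to `⊞`. Since the communication height is attained by some path, comparing the maxima along
these paths gives both inequalities.
-/

/-- Spin value of a Boolean: `+1` for `true`, `−1` for `false`. -/
def spin (b : Bool) : ℝ := if b then 1 else -1

/-- The product of the spins at the two endpoints of an unoriented edge. -/
noncomputable def edgeEnergy {V : Type*} (σ : V → Bool) : Sym2 V → ℝ :=
  Sym2.lift ⟨fun v w => spin (σ v) * spin (σ w), fun v w => by ring⟩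

/-- The Hamiltonian `H(σ) = −(J/2)·Σ_{(v,w)∈E} σ(v)σ(w) − (h/2)·Σ_v σ(v)` of a
multigraph with edge multiset `E` (edges counted with multiplicity). -/
noncomputable def hamiltonian {V : Type*} [Fintype V] (J h : ℝ)
    (E : Multiset (Sym2 V)) (σ : V → Bool) : ℝ :=
  -(J/2) * (E.map (edgeEnergy σ)).sum - (h/2) * ∑ v, spin (σ v)

/-- Two spin configurations differ at exactly one vertex. -/
def IsFlipStep {V : Type*} [DecidableEq V] (σ τ : V → Bool) : Prop :=
  ∃ v, τ = Function.update σ v (! σ v)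

/-- The communication height `Φ(ξ,ζ)`: the minimum over paths `γ : ξ → ζ` of
single spin-flips of the maximal energy along the path. -/
noncomputable def commHeight {V : Type*} [Fintype V] [DecidableEq V]
    (H : (V → Bool) → ℝ) (ξ ζ : V → Bool) : ℝ :=
  sInf { M : ℝ | ∃ (k : ℕ) (γ : Fin (k+1) → (V → Bool)),
    γ 0 = ξ ∧ γ (Fin.last k) = ζ ∧
    (∀ i : Fin k, IsFlipStep (γ i.castSucc) (γ i.succ)) ∧
    M = Finset.univ.sup' ⟨0, Finset.mem_univ 0⟩ (fun i => H (γ i)) }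

/-- The energy barrier `Γ* = Φ(⊟,⊞) − H(⊟)` of an energy landscape `H` on spin
configurations. -/
noncomputable def gammaStar {V : Type*} [Fintype V] [DecidableEq V]
    (H : (V → Bool) → ℝ) : ℝ :=
  commHeight H (fun _ => false) (fun _ => true) - H (fun _ => false)


/-- A multigraph (given by its edge multiset) is connected: any two vertices are
joined by a walk along edges. -/
def MultigraphConnected {V : Type*} (E : Multiset (Sym2 V)) : Prop :=
  ∀ v w : V, Relation.ReflTransGen (fun a b => s(a, b) ∈ E) v w

open Relation Function Finset

theorem Relation.reflTransGen_of_fin_chain {α : Type*} {r : α → α → Prop} {k : ℕ}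
    (γ : Fin (k + 1) → α) (hγ : ∀ i : Fin k, r (γ i.castSucc) (γ i.succ)) :
    ReflTransGen r (γ 0) (γ (Fin.last k)) := by
  suffices ∀ i : Fin (k + 1), ReflTransGen r (γ 0) (γ i) from this _
  intro i
  induction i using Fin.induction with
  | zero => exact .refl
  | succ i ih => exact ih.tail (hγ i)

theorem Relation.ReflTransGen.exists_fin_chain {α : Type*} {r : α → α → Prop} {a b : α}
    (hab : ReflTransGen r a b) :
    ∃ (k : ℕ) (γ : Fin (k + 1) → α), γ 0 = a ∧ γ (Fin.last k) = b ∧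
      ∀ i : Fin k, r (γ i.castSucc) (γ i.succ) := by
  induction hab with
  | refl => exact ⟨0, fun _ => a, rfl, rfl, Fin.elim0⟩
  | @tail b c _ hbc ih =>
    obtain ⟨k, γ, h0, hlast, hγ⟩ := ih
    refine ⟨k + 1, Fin.snoc γ c, by simpa using h0, Fin.snoc_last _ _, fun i => ?_⟩
    induction i using Fin.lastCases with
    | last => simpa [hlast] using hbc
    | cast j =>
      rw [Fin.succ_castSucc, Fin.snoc_castSucc, Fin.snoc_castSucc]
      exact hγ j

section CommHeight

variable {V : Type*} [Fintype V] [DecidableEq V]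

theorem reflTransGen_isFlipStep_between (ξ ζ : V → Bool) :
    ReflTransGen (fun σ τ => IsFlipStep σ τ ∧ ∀ v, τ v = ξ v ∨ τ v = ζ v) ξ ζ := by
  suffices ∀ (s : Finset V) (σ : V → Bool), (∀ v, σ v = ξ v ∨ σ v = ζ v) →
      (∀ v ∉ s, σ v = ζ v) →
      ReflTransGen (fun σ τ => IsFlipStep σ τ ∧ ∀ v, τ v = ξ v ∨ τ v = ζ v) σ ζ from
    this univ ξ (fun _ => .inl rfl) (by simp)
  intro s
  induction s using Finset.induction with
  | empty =>
    intro σ _ hσ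
    obtain rfl : σ = ζ := funext fun v => hσ v (notMem_empty v)
    exact .refl
  | @insert a s _ ih =>
    intro σ hσ hσs
    have hbetween : ∀ v, update σ a (ζ a) v = ξ v ∨ update σ a (ζ a) v = ζ v := by
      intro v
      rcases eq_or_ne v a with rfl | hva
      · simp
      · simpa [hva] using hσ v
    have hagree : ∀ v ∉ s, update σ a (ζ a) v = ζ v := by
      intro v hv
      rcases eq_or_ne v a with rfl | hva
      · simp
      · simpa [hva] using hσs v (by simp [hva, hv])
    refine .trans ?_ (ih _ hbetween hagree)
    by_cases hσa : σ a = ζ a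
    · rw [← hσa, update_eq_self]
    · refine .single ⟨⟨a, ?_⟩, hbetween⟩
      congr 1
      revert hσa; cases σ a <;> cases ζ a <;> simp

/-- `commHeight H ξ ζ` is, by definition, `sInf (pathHeights H ξ ζ)`. -/
def pathHeights (H : (V → Bool) → ℝ) (ξ ζ : V → Bool) : Set ℝ :=
  { M : ℝ | ∃ (k : ℕ) (γ : Fin (k + 1) → (V → Bool)),
    γ 0 = ξ ∧ γ (Fin.last k) = ζ ∧
    (∀ i : Fin k, IsFlipStep (γ i.castSucc) (γ i.succ)) ∧
    M = Finset.univ.sup' ⟨0, Finset.mem_univ 0⟩ (fun i => H (γ i)) }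

variable (H : (V → Bool) → ℝ)

theorem pathHeights_finite (ξ ζ : V → Bool) : (pathHeights H ξ ζ).Finite := by
  refine (Set.finite_range H).subset ?_
  rintro _ ⟨k, γ, -, -, -, rfl⟩
  obtain ⟨i, -, hi⟩ := univ.exists_mem_eq_sup' ⟨0, mem_univ 0⟩ (fun i => H (γ i))
  exact ⟨γ i, hi.symm⟩

theorem pathHeights_nonempty (ξ ζ : V → Bool) : (pathHeights H ξ ζ).Nonempty := by
  have hflips : ReflTransGen IsFlipStep ξ ζ :=
    ReflTransGen.mono (fun _ _ h => h.1) _ _ (reflTransGen_isFlipStep_between ξ ζ)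
  obtain ⟨k, γ, h0, hlast, hγ⟩ := hflips.exists_fin_chain
  exact ⟨_, k, γ, h0, hlast, hγ, rfl⟩

theorem commHeight_le_iff {ξ ζ : V → Bool} {M : ℝ} :
    commHeight H ξ ζ ≤ M ↔
      H ξ ≤ M ∧ ReflTransGen (fun σ τ => IsFlipStep σ τ ∧ H τ ≤ M) ξ ζ := by
  constructor
  · intro hM
    obtain ⟨k, γ, rfl, rfl, hγ, hmax⟩ :=
      (pathHeights_nonempty H ξ ζ).csInf_mem (pathHeights_finite H ξ ζ)
    have hle : ∀ i, H (γ i) ≤ M := fun i =>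
      (le_sup' (fun i => H (γ i)) (mem_univ i)).trans (hmax ▸ hM)
    exact ⟨hle 0, reflTransGen_of_fin_chain γ fun i => ⟨hγ i, hle _⟩⟩
  · rintro ⟨hξ, hchain⟩
    obtain ⟨k, γ, h0, hlast, hγ⟩ := hchain.exists_fin_chain
    refine (csInf_le (pathHeights_finite H ξ ζ).bddBelow
      ⟨k, γ, h0, hlast, fun i => (hγ i).1, rfl⟩).trans (sup'_le _ _ fun i _ => ?_)
    induction i using Fin.cases with
    | zero => exact h0 ▸ hξ
    | succ i => exact (hγ i).2

theorem le_commHeight_right (ξ ζ : V → Bool) : H ζ ≤ commHeight H ξ ζ := by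
  obtain ⟨hξ, hchain⟩ := (commHeight_le_iff H).1 (le_refl (commHeight H ξ ζ))
  rcases hchain.cases_tail with rfl | ⟨_, _, -, hζ⟩
  exacts [hξ, hζ]

theorem commHeight_le_of_le_of_le {ξ η ζ : V → Bool} {M : ℝ}
    (h₁ : commHeight H ξ η ≤ M) (h₂ : commHeight H η ζ ≤ M) : commHeight H ξ ζ ≤ M := by
  rw [commHeight_le_iff] at *
  exact ⟨h₁.1, h₁.2.trans h₂.2⟩

theorem commHeight_le_of_forall_between {ξ ζ : V → Bool} {M : ℝ}
    (hM : ∀ τ : V → Bool, (∀ v, τ v = ξ v ∨ τ v = ζ v) → H τ ≤ M) :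
    commHeight H ξ ζ ≤ M :=
  (commHeight_le_iff H).2 ⟨hM ξ fun _ => .inl rfl,
    ReflTransGen.mono (fun _ τ h => ⟨h.1, hM τ h.2⟩) _ _ (reflTransGen_isFlipStep_between ξ ζ)⟩

theorem commHeight_map_le {W : Type*} [Fintype W] [DecidableEq W] {H' : (W → Bool) → ℝ}
    (f : (V → Bool) → W → Bool) (hf : ∀ σ τ, IsFlipStep σ τ → ReflGen IsFlipStep (f σ) (f τ))
    {c : ℝ} (hH : ∀ σ, H' (f σ) ≤ H σ + c) (ξ ζ : V → Bool) :
    commHeight H' (f ξ) (f ζ) ≤ commHeight H ξ ζ + c := by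
  obtain ⟨hξ, hchain⟩ := (commHeight_le_iff H).1 (le_refl (commHeight H ξ ζ))
  refine (commHeight_le_iff H').2 ⟨by linarith [hH ξ], ?_⟩
  refine ReflTransGen.lift' f (fun σ τ hστ => ?_) _ _ hchain
  have hτ : H' (f τ) ≤ commHeight H ξ ζ + c := by linarith [hH τ, hστ.2]
  rcases (reflGen_iff _ _ _).1 (hf σ τ hστ.1) with heq | hflip
  · show ReflTransGen _ (f σ) (f τ)
    rw [heq]
  · exact .single ⟨hflip, hτ⟩

end CommHeight

theorem Function.extend_update {V W γ : Type*} {ι : V → W} [DecidableEq V] [DecidableEq W]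
    (hι : Injective ι) (σ : V → γ) (e : W → γ) (v : V) (b : γ) :
    extend ι (update σ v b) e = update (extend ι σ e) (ι v) b := by
  funext w
  by_cases hw : ∃ u, ι u = w
  · obtain ⟨u, rfl⟩ := hw
    rcases eq_or_ne u v with rfl | huv
    · simp [hι.extend_apply]
    · rw [hι.extend_apply, update_of_ne huv, update_of_ne (hι.ne huv), hι.extend_apply]
  · have hwv : w ≠ ι v := fun h => hw ⟨v, h.symm⟩
    rw [extend_apply' _ _ _ hw, update_of_ne hwv, extend_apply' _ _ _ hw]

section Embedding

variable {V W : Type*} [DecidableEq V] [DecidableEq W] {ι : V → W}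

theorem IsFlipStep.comp (hι : Injective ι) {σ τ : W → Bool} (hστ : IsFlipStep σ τ) :
    ReflGen IsFlipStep (σ ∘ ι) (τ ∘ ι) := by
  obtain ⟨w, rfl⟩ := hστ
  by_cases hw : ∃ v, ι v = w
  · obtain ⟨v, rfl⟩ := hw
    exact .single ⟨v, update_comp_eq_of_injective σ hι v _⟩
  · rw [update_comp_eq_of_forall_ne σ _ fun v hv => hw ⟨v, hv⟩]

theorem IsFlipStep.extend (hι : Injective ι) {σ τ : V → Bool} (hστ : IsFlipStep σ τ)
    (e : W → Bool) : IsFlipStep (extend ι σ e) (extend ι τ e) := by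
  obtain ⟨v, rfl⟩ := hστ
  exact ⟨ι v, by rw [extend_update hι, hι.extend_apply]⟩

variable [Fintype V] [Fintype W] {HV : (V → Bool) → ℝ} {HW : (W → Bool) → ℝ}

theorem gammaStar_le_of_comp (hι : Injective ι) (C : ℝ)
    (hH : ∀ τ : W → Bool, HV (τ ∘ ι) - HV (fun _ => false) ≤
      HW τ - HW (fun _ => false) + C) :
    gammaStar HV ≤ gammaStar HW + C := by
  have h : commHeight HV (fun _ => false) (fun _ => true) ≤
      commHeight HW (fun _ => false) (fun _ => true) +
        (C + HV (fun _ => false) - HW (fun _ => false)) :=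
    commHeight_map_le HW (· ∘ ι) (fun _ _ => IsFlipStep.comp hι)
      (fun τ => by linarith [hH τ]) (fun _ => false) (fun _ => true)
  unfold gammaStar
  linarith

theorem gammaStar_le_of_le_comp (hι : Injective ι) (C : ℝ)
    (hH : ∀ τ : W → Bool, HW τ - HW (fun _ => false) ≤
      HV (τ ∘ ι) - HV (fun _ => false) + C) :
    gammaStar HW ≤ gammaStar HV + C := by
  set c := C + HW (fun _ => false) - HV (fun _ => false)
  have hext : ∀ σ, HW (extend ι σ fun _ => false) ≤ HV σ + c := fun σ => by
    have := hH (extend ι σ fun _ => false)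
    rw [extend_comp hι] at this
    linarith
  have hlift : commHeight HW (fun _ => false) (extend ι (fun _ => true) fun _ => false) ≤
      commHeight HV (fun _ => false) (fun _ => true) + c := by
    have := commHeight_map_le HV (fun σ => extend ι σ fun _ => false)
      (fun _ _ h => .single (h.extend hι _)) hext (fun _ => false) (fun _ => true)
    rwa [extend_const] at this
  have hfill : commHeight HW (extend ι (fun _ => true) fun _ => false) (fun _ => true) ≤
      commHeight HV (fun _ => false) (fun _ => true) + c := by
    refine commHeight_le_of_forall_between HW fun τ hτ => ?_
    have hτι : τ ∘ ι = fun _ => true := funext fun v => by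
      rcases hτ (ι v) with h | h
      · simpa [hι.extend_apply] using h
      · exact h
    have := hH τ
    rw [hτι] at this
    linarith [le_commHeight_right HV (fun _ => false) (fun _ => true)]
  unfold gammaStar
  linarith [commHeight_le_of_le_of_le HW hlift hfill]

end Embedding

section Hamiltonian

theorem abs_sum_map_le_card_mul {α : Type*} (m : Multiset α) (f : α → ℝ) {c : ℝ}
    (hf : ∀ x ∈ m, |f x| ≤ c) : |(m.map f).sum| ≤ m.card * c := by
  refine Multiset.abs_sum_le_sum_abs.trans ?_
  rw [Multiset.map_map]
  simpa using Multiset.sum_le_card_nsmul (m.map (abs ∘ f)) c (by simpa using hf)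

theorem abs_spin_sub_spin_le (a b : Bool) : |spin a - spin b| ≤ 2 := by
  cases a <;> cases b <;> norm_num [spin]

theorem abs_edgeEnergy_sub_edgeEnergy_le {V : Type*} (σ τ : V → Bool) (e : Sym2 V) :
    |edgeEnergy σ e - edgeEnergy τ e| ≤ 2 := by
  induction e using Sym2.inductionOn with
  | hf a b =>
    simp only [edgeEnergy, Sym2.lift_mk]
    cases σ a <;> cases σ b <;> cases τ a <;> cases τ b <;> norm_num [spin]

theorem edgeEnergy_map {V W : Type*} (ι : V → W) (τ : W → Bool) (e : Sym2 V) :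
    edgeEnergy τ (e.map ι) = edgeEnergy (τ ∘ ι) e := by
  induction e using Sym2.inductionOn with
  | hf a b => rfl

variable {W : Type*} [Fintype W] [DecidableEq W] (J h : ℝ)

theorem hamiltonian_sub_hamiltonian (E E' : Multiset (Sym2 W)) (τ : W → Bool) :
    hamiltonian J h E' τ - hamiltonian J h E τ =
      -(J / 2) * (((E' - E).map (edgeEnergy τ)).sum - ((E - E').map (edgeEnergy τ)).sum) := by
  have hunion : E' - E + E = E - E' + E' := by
    rw [← Multiset.union_def, ← Multiset.union_def, Multiset.union_comm]
  have hsum := congrArg (fun m => (m.map (edgeEnergy τ)).sum) hunion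
  simp only [Multiset.map_add, Multiset.sum_add] at hsum
  unfold hamiltonian
  linear_combination (J / 2) * hsum

theorem hamiltonian_map {V : Type*} [Fintype V] {ι : V → W} (hι : Injective ι)
    (E : Multiset (Sym2 V)) (τ : W → Bool) :
    hamiltonian J h (E.map (Sym2.map ι)) τ =
      hamiltonian J h E (τ ∘ ι) - (h / 2) * ∑ w ∈ (univ.image ι)ᶜ, spin (τ w) := by
  have hfield : ∑ w, spin (τ w) = ∑ v, spin (τ (ι v)) + ∑ w ∈ (univ.image ι)ᶜ, spin (τ w) := by
    rw [← sum_add_sum_compl (univ.image ι), sum_image hι.injOn]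
  simp only [hamiltonian, Multiset.map_map, Function.comp_def, edgeEnergy_map, hfield]
  ring

theorem abs_hamiltonian_sub_hamiltonian_comp_le {V : Type*} [Fintype V]
    (hJ : 0 ≤ J) (hh : 0 ≤ h) {ι : V → W} (hι : Injective ι)
    (E : Multiset (Sym2 V)) (E' : Multiset (Sym2 W)) {k : ℕ}
    (hk : ((E' - E.map (Sym2.map ι)) + (E.map (Sym2.map ι) - E')).card ≤ k)
    (τ : W → Bool) :
    |(hamiltonian J h E' τ - hamiltonian J h E' (fun _ => false)) -
        (hamiltonian J h E (τ ∘ ι) - hamiltonian J h E (fun _ => false))| ≤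
      J * k + h * ((Fintype.card W : ℝ) - Fintype.card V) := by
  set A := E.map (Sym2.map ι)
  set s := (univ.image ι)ᶜ
  have hdecomp : ∀ σ : W → Bool, hamiltonian J h E' σ - hamiltonian J h E (σ ∘ ι) =
      -(J / 2) * (((E' - A).map (edgeEnergy σ)).sum - ((A - E').map (edgeEnergy σ)).sum) -
        (h / 2) * ∑ w ∈ s, spin (σ w) := fun σ => by
    rw [← hamiltonian_sub_hamiltonian, hamiltonian_map J h hι]
    ring
  have hedge : ∀ m : Multiset (Sym2 W), |(m.map (edgeEnergy τ)).sum -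
      (m.map (edgeEnergy fun _ => false)).sum| ≤ m.card * 2 := fun m => by
    rw [← Multiset.sum_map_sub]
    exact abs_sum_map_le_card_mul m _ fun e _ => abs_edgeEnergy_sub_edgeEnergy_le _ _ e
  have hfield : |∑ w ∈ s, spin (τ w) - ∑ w ∈ s, spin false| ≤ s.card * 2 := by
    rw [← sum_sub_distrib]
    exact abs_sum_map_le_card_mul s.val _ fun w _ => abs_spin_sub_spin_le _ _
  have hcardk : ((E' - A).card : ℝ) + (A - E').card ≤ k := by
    exact_mod_cast (Multiset.card_add _ _).symm.trans_le hk
  have hcards : (s.card : ℝ) = Fintype.card W - Fintype.card V := by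
    rw [card_compl, card_image_of_injective _ hι, card_univ,
      Nat.cast_sub (Fintype.card_le_of_injective ι hι)]
  have hτ := hdecomp τ
  have hbot : hamiltonian J h E' (fun _ => false) - hamiltonian J h E (fun _ => false) = _ :=
    hdecomp fun _ => false
  calc _ = |(J / 2) * ((((E' - A).map (edgeEnergy τ)).sum -
              ((E' - A).map (edgeEnergy fun _ => false)).sum) -
            (((A - E').map (edgeEnergy τ)).sum -
              ((A - E').map (edgeEnergy fun _ => false)).sum)) +
          (h / 2) * (∑ w ∈ s, spin (τ w) - ∑ w ∈ s, spin false)| := by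
        rw [← abs_neg]
        congr 1
        linear_combination hbot - hτ
    _ ≤ (J / 2) * ((E' - A).card * 2 + (A - E').card * 2) + (h / 2) * (s.card * 2) := by
        refine (abs_add_le _ _).trans (add_le_add ?_ ?_) <;>
          rw [abs_mul, abs_of_nonneg (by positivity)]
        · exact mul_le_mul_of_nonneg_left ((abs_sub _ _).trans (add_le_add (hedge _) (hedge _)))
            (by positivity)
        · exact mul_le_mul_of_nonneg_left hfield (by positivity)
    _ ≤ J * k + h * ((Fintype.card W : ℝ) - Fintype.card V) := by
        rw [← hcards]
        nlinarith

end Hamiltonian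

theorem stmt2_general {V W : Type*} [Fintype V] [DecidableEq V] [Fintype W] [DecidableEq W]
    (J h : ℝ) (hJ : 0 < J) (hh : 0 < h)
    (E : Multiset (Sym2 V)) (E' : Multiset (Sym2 W))
    (ι : V → W) (hι : Function.Injective ι) (k : ℕ)
    (hk : ((E' - E.map (Sym2.map ι)) + (E.map (Sym2.map ι) - E')).card ≤ k) :
    |gammaStar (hamiltonian J h E) - gammaStar (hamiltonian J h E')| ≤
      J * k + h * ((Fintype.card W : ℝ) - Fintype.card V) := by
  set C := J * k + h * ((Fintype.card W : ℝ) - Fintype.card V)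
  have hbound := fun τ => abs_le.1
    (abs_hamiltonian_sub_hamiltonian_comp_le J h hJ.le hh.le hι E E' hk τ)
  have hWV := gammaStar_le_of_le_comp (HV := hamiltonian J h E) (HW := hamiltonian J h E') hι C
    fun τ => by linarith [(hbound τ).2]
  have hVW := gammaStar_le_of_comp (HV := hamiltonian J h E) (HW := hamiltonian J h E') hι C
    fun τ => by linarith [(hbound τ).1]
  exact abs_le.2 ⟨by linarith, by linarith⟩

/-- Let `J > 0`, `h > 0`, let `G = (V,E)` and `G̃ = (Ṽ,Ẽ)` be finite connected
multigraphs with `|Ṽ| ≥ |V|`, and let `ι : V → Ṽ` be an injection such that the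
symmetric difference of `Ẽ` and the image of `E` under `ι` contains at most `k`
edges (counted with multiplicity). Then
`|Γ*(G) − Γ*(G̃)| ≤ J·k + h·(|Ṽ| − |V|)`. -/
theorem stmt2 {V W : Type*} [Fintype V] [DecidableEq V] [Fintype W] [DecidableEq W]
    (J h : ℝ) (hJ : 0 < J) (hh : 0 < h)
    (E : Multiset (Sym2 V)) (E' : Multiset (Sym2 W))
    (hconn : MultigraphConnected E) (hconn' : MultigraphConnected E')
    (hcard : Fintype.card V ≤ Fintype.card W)
    (ι : V → W) (hι : Function.Injective ι) (k : ℕ)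
    (hk : ((E' - E.map (Sym2.map ι)) + (E.map (Sym2.map ι) - E')).card ≤ k) :
    |gammaStar (hamiltonian J h E) - gammaStar (hamiltonian J h E')| ≤
      J * k + h * ((Fintype.card W : ℝ) - Fintype.card V) :=
  stmt2_general J h hJ hh E E' ι hι k hk
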